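/- arXiv:1205.6058 — 2 statements merged into one kernel-verified Lean document; each statement's English description precedes it below -/
import Mathlib

section
/- Let F̄_1 be the free As-bimodule generated by elements f_n of degree 1−n (n ≥ 1), with differential f_k ∂ = Σ_{r+2+t=k} (−1)^t (1^{⊗r}⊗m⊗1^{⊗t}) f_{k−1} + Σ_{i+j=k} (−1)^j (f_i ⊗ f_j) m. Then ∂² = 0. -/
/- Write `x y` for juxtaposition (concatenation of basis lists) and `σ` for the parity
involution `x ↦ (-1)^{deg x} x`. By construction `∂(x y) = ∂x · σy + x · ∂y`, and `∂` is odd,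
so `∂σ = -σ∂`; hence `∂²(x y) = ∂²x · y + x · ∂²y` and it suffices to check `∂² = 0` on a
single factor `(m^{(a₁)} ⊗ ⋯ ⊗ m^{(aₙ)}) f_n`. There the terms of `∂²` cancel in pairs with
opposite signs: two merges commute up to an index shift (associativity of `m`), two splits
reassociate, and a merge followed by a split equals a split followed by a merge inside the
left or the right piece. -/

/- A concrete model of the free `As`-bimodule `F̄₁ = As ⊙ k{f_n | n ≥ 1} ⊙ As`.
Its `k`-basis consists of the elements
`(m^{(a₁₁)} ⊗ ⋯ ⊗ m^{(a_{k,i_k})}) (f_{i₁} ⊗ ⋯ ⊗ f_{i_k}) m^{(k)}`,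
encoded as lists `L = [l₁, …, l_k]` of (nonempty) lists of (positive) arities: the `q`-th
inner list `l_q` records the arities of the `As`-factors feeding the `i_q = l_q.length`
inputs of `f_{i_q}`, and the bottom factor is `m^{(k)}`.  The generator `f_n` corresponds to
`List.replicate n [1]`, and `deg f_n = 1 - n`.  The differential
`f_k ∂ = Σ_{r+2+t=k} (−1)^t (1^{⊗r}⊗m⊗1^{⊗t}) f_{k−1} + Σ_{i+j=k} (−1)^j (f_i ⊗ f_j) m`
extends uniquely to a bimodule derivation `∂` of `F̄₁` (the `As`-coefficients compose:
top `m`'s merge arities, the inner right `m` merges into the bottom `m^{(k)}`, and the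
Koszul signs are recorded by the parities `deg f_i ≡ 1 + i`). -/

section Model

variable (k : Type*) [CommRing k]

/-- The underlying module of `F̄₁`: the free `k`-module on the set of basis trees. -/
abbrev FBar := (List (List ℕ)) →₀ k

/-- Valid basis elements: at least one `f`-factor, each `f`-factor has at least one input,
all arities positive. -/
def ValidB (L : List (List ℕ)) : Prop :=
  L ≠ [] ∧ ∀ l ∈ L, l ≠ [] ∧ ∀ a ∈ l, 1 ≤ a

/-- Merge the entries `r` and `r+1` of `l` (composition with `1^{⊗r}⊗m⊗1^{⊗t}` on top). -/
def mergeAt (l : List ℕ) (r : ℕ) : List ℕ :=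
  l.take r ++ [l.getD r 0 + l.getD (r + 1) 0] ++ l.drop (r + 2)

/-- Koszul parity picked up by `∂` acting on the `q`-th factor `f_{i_q}`: the degrees of the
later factors, `Σ_{r>q} (1 + i_r)`. -/
def epsExp (L : List (List ℕ)) (q : ℕ) : ℕ :=
  ∑ r ∈ Finset.Ico (q + 1) L.length, (1 + (L.getD r []).length)

/-- The value of the bimodule derivation `∂` on a basis element. -/
noncomputable def dGen (L : List (List ℕ)) : FBar k :=
  ∑ q ∈ Finset.range L.length,
    ((-1 : k) ^ epsExp L q) •
      ((∑ r ∈ Finset.range ((L.getD q []).length - 1),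
          ((-1 : k) ^ ((L.getD q []).length - 2 - r)) •
            Finsupp.single (L.set q (mergeAt (L.getD q []) r)) (1 : k))
        + ∑ a ∈ Finset.Ico 1 (L.getD q []).length,
            ((-1 : k) ^ ((L.getD q []).length - a)) •
              Finsupp.single
                (L.take q ++ [(L.getD q []).take a, (L.getD q []).drop a] ++ L.drop (q + 1))
                (1 : k))

/-- The differential `∂` of `F̄₁`. -/
noncomputable def dBar : FBar k →ₗ[k] FBar k :=
  Finsupp.lift (FBar k) k (List (List ℕ)) (dGen k)

end Model

open Finset

theorem Finset.sum_add_sum_eq_zero_of_bij {ι κ M : Type*} [AddCommMonoid M]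
    {s : Finset ι} {t : Finset κ} {f : ι → M} {g : κ → M} (i : ι → κ) (j : κ → ι)
    (hi : ∀ a ∈ s, i a ∈ t) (hj : ∀ b ∈ t, j b ∈ s) (left_inv : ∀ a ∈ s, j (i a) = a)
    (right_inv : ∀ b ∈ t, i (j b) = b) (h : ∀ a ∈ s, f a + g (i a) = 0) :
    ∑ a ∈ s, f a + ∑ b ∈ t, g b = 0 := by
  rw [← Finset.sum_nbij' i j hi hj left_inv right_inv fun _ _ => rfl, ← Finset.sum_add_distrib]
  exact Finset.sum_eq_zero h

theorem neg_one_pow_smul_add_neg_one_pow_smul {R M : Type*} [Ring R] [AddCommGroup M]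
    [Module R M] {a b : ℕ} (h : Odd (a + b)) (v : M) :
    (-1 : R) ^ a • v + (-1 : R) ^ b • v = 0 := by
  have hb : (-1 : R) ^ b = (-1) ^ (a + 1) := by
    have := Nat.odd_iff.1 h
    exact neg_one_pow_congr (by simp only [Nat.even_iff]; omega)
  rw [hb, pow_succ, mul_neg_one, neg_smul, add_neg_cancel]

section MergeAt

theorem mergeAt_cons_succ (x : ℕ) (l : List ℕ) (r : ℕ) :
    mergeAt (x :: l) (r + 1) = x :: mergeAt l r := by
  simp [mergeAt]

theorem mergeAt_cons_cons_zero (x y : ℕ) (l : List ℕ) :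
    mergeAt (x :: y :: l) 0 = (x + y) :: l := by
  simp [mergeAt]

theorem length_mergeAt {l : List ℕ} {r : ℕ} (h : r + 1 < l.length) :
    (mergeAt l r).length = l.length - 1 := by
  induction r generalizing l with
  | zero =>
    match l, h with
    | x :: y :: t, _ => simp [mergeAt_cons_cons_zero]
  | succ r ih =>
    match l, h with
    | x :: l', h =>
      simp only [mergeAt_cons_succ, List.length_cons, ih (by simpa using h)]
      simp at h
      omega

theorem take_mergeAt_of_lt {l : List ℕ} {r a : ℕ} (h : r < a) (hl : r + 1 < l.length) :
    (mergeAt l r).take a = mergeAt (l.take (a + 1)) r := by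
  induction r generalizing l a with
  | zero =>
    match l, hl, a, h with
    | x :: y :: t, _, a + 1, _ => simp [mergeAt_cons_cons_zero]
  | succ r ih =>
    match l, hl, a, h with
    | x :: l', hl, a + 1, h =>
      simp [mergeAt_cons_succ, ih (by omega : r < a) (by simpa using hl)]

theorem drop_mergeAt_of_lt {l : List ℕ} {r a : ℕ} (h : r < a) (hl : r + 1 < l.length) :
    (mergeAt l r).drop a = l.drop (a + 1) := by
  induction r generalizing l a with
  | zero =>
    match l, hl, a, h with
    | x :: y :: t, _, a + 1, _ => simp [mergeAt_cons_cons_zero]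
  | succ r ih =>
    match l, hl, a, h with
    | x :: l', hl, a + 1, h =>
      simp [mergeAt_cons_succ, ih (by omega : r < a) (by simpa using hl)]

theorem take_mergeAt_of_le {l : List ℕ} {r a : ℕ} (h : a ≤ r) (hl : r + 1 < l.length) :
    (mergeAt l r).take a = l.take a := by
  induction a generalizing l r with
  | zero => simp
  | succ a ih =>
    match r, h, l, hl with
    | r + 1, h, x :: l', hl =>
      simp [mergeAt_cons_succ, ih (by omega : a ≤ r) (by simpa using hl)]

theorem drop_mergeAt_of_le {l : List ℕ} {r a : ℕ} (h : a ≤ r) (hl : r + 1 < l.length) :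
    (mergeAt l r).drop a = mergeAt (l.drop a) (r - a) := by
  induction a generalizing l r with
  | zero => simp
  | succ a ih =>
    match r, h, l, hl with
    | r + 1, h, x :: l', hl =>
      simp [mergeAt_cons_succ, ih (by omega : a ≤ r) (by simpa using hl)]

theorem mergeAt_mergeAt_of_le {l : List ℕ} {r r' : ℕ} (h : r ≤ r') (hl : r' + 2 < l.length) :
    mergeAt (mergeAt l (r' + 1)) r = mergeAt (mergeAt l r) r' := by
  induction r generalizing l r' with
  | zero =>
    match r', l, hl with
    | 0, x :: y :: z :: t, _ => simp [mergeAt_cons_succ, mergeAt_cons_cons_zero, add_assoc]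
    | r' + 1, x :: y :: l', _ => simp only [mergeAt_cons_succ, mergeAt_cons_cons_zero]
  | succ r ih =>
    match r', h, l, hl with
    | r' + 1, h, x :: l', hl =>
      have hl' : r' + 2 < l'.length := by simp only [List.length_cons] at hl; omega
      simp only [mergeAt_cons_succ, ih (by omega : r ≤ r') hl']

end MergeAt

section Degree

/-- A natural number congruent mod 2 to the degree of the basis element `L`
(`deg f_i = 1 - i ≡ 1 + i`); the `As`-factors have degree `0`. -/
def totalDeg (L : List (List ℕ)) : ℕ := (L.map fun l => 1 + l.length).sum

@[simp] theorem totalDeg_nil : totalDeg [] = 0 := rfl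

@[simp] theorem totalDeg_cons (l : List ℕ) (L : List (List ℕ)) :
    totalDeg (l :: L) = 1 + l.length + totalDeg L := by
  simp [totalDeg]

@[simp] theorem totalDeg_append (L₁ L₂ : List (List ℕ)) :
    totalDeg (L₁ ++ L₂) = totalDeg L₁ + totalDeg L₂ := by
  simp [totalDeg]

theorem totalDeg_set {L : List (List ℕ)} {q : ℕ} (h : q < L.length) (x : List ℕ) :
    totalDeg (L.set q x) + (L.getD q []).length = totalDeg L + x.length := by
  induction L generalizing q with
  | nil => simp at h
  | cons l L ih =>
    cases q with
    | zero => simp; omega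
    | succ q =>
      have := ih (by simpa using h)
      simp only [List.set_cons_succ, totalDeg_cons, List.getD_cons_succ]
      omega

theorem totalDeg_eq_sum_range (L : List (List ℕ)) :
    totalDeg L = ∑ r ∈ range L.length, (1 + (L.getD r []).length) := by
  induction L with
  | nil => simp
  | cons l L ih => simp [Finset.sum_range_succ', ih]; omega

theorem epsExp_eq_totalDeg_drop (L : List (List ℕ)) (q : ℕ) :
    epsExp L q = totalDeg (L.drop (q + 1)) := by
  rw [epsExp, totalDeg_eq_sum_range, Finset.sum_Ico_eq_sum_range, List.length_drop]
  simp [List.getD_eq_getElem?_getD, List.getElem?_drop]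

end Degree

section Derivation

variable {k : Type*} [CommRing k]

theorem epsExp_append_of_lt {L₁ : List (List ℕ)} (L₂ : List (List ℕ)) {q : ℕ}
    (h : q < L₁.length) : epsExp (L₁ ++ L₂) q = epsExp L₁ q + totalDeg L₂ := by
  rw [epsExp_eq_totalDeg_drop, epsExp_eq_totalDeg_drop, List.drop_append_of_le_length h,
    totalDeg_append]

theorem epsExp_append_length_add (L₁ L₂ : List (List ℕ)) (q : ℕ) :
    epsExp (L₁ ++ L₂) (L₁.length + q) = epsExp L₂ q := by
  rw [epsExp_eq_totalDeg_drop, epsExp_eq_totalDeg_drop, Nat.add_assoc,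
    List.drop_length_add_append]

theorem dBar_single (L : List (List ℕ)) (c : k) :
    dBar k (Finsupp.single L c) = c • dGen k L := by
  simp [dBar]

theorem dGen_append (L₁ L₂ : List (List ℕ)) :
    dGen k (L₁ ++ L₂) =
      (-1 : k) ^ totalDeg L₂ • (dGen k L₁).mapDomain (· ++ L₂)
        + (dGen k L₂).mapDomain (L₁ ++ ·) := by
  simp only [dGen, List.length_append, Finset.sum_range_add, Finsupp.mapDomain_finsetSum,
    Finset.smul_sum, Finsupp.mapDomain_smul, Finsupp.mapDomain_add, Finsupp.mapDomain_single]
  congr 1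
  · refine Finset.sum_congr rfl fun q hq => ?_
    rw [Finset.mem_range] at hq
    rw [List.getD_append _ _ _ _ hq, epsExp_append_of_lt _ hq, pow_add, mul_comm, ← smul_smul]
    congr 2
    refine congrArg₂ (· + ·) (Finset.sum_congr rfl fun r _ => ?_)
      (Finset.sum_congr rfl fun a _ => ?_)
    · rw [List.set_append_left _ _ hq]
    · rw [List.take_append_of_le_length hq.le, List.drop_append_of_le_length hq]
      simp
  · refine Finset.sum_congr rfl fun q _ => ?_
    rw [List.getD_append_right _ _ _ _ (by omega), Nat.add_sub_cancel_left,
      epsExp_append_length_add]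
    congr 1
    refine congrArg₂ (· + ·) (Finset.sum_congr rfl fun r _ => ?_)
      (Finset.sum_congr rfl fun a _ => ?_)
    · rw [List.set_append_right _ _ (by omega), Nat.add_sub_cancel_left]
    · rw [Nat.add_assoc, List.drop_length_add_append, List.take_length_add_append]
      simp

end Derivation

section Parity

variable {k : Type*} [CommRing k]

theorem totalDeg_mod_two_of_mem_support_dGen {L N : List (List ℕ)}
    (hN : N ∈ (dGen k L).support) : totalDeg N % 2 = (totalDeg L + 1) % 2 := by
  classical
  obtain ⟨q, hq, hN⟩ := Finset.mem_biUnion.mp (Finsupp.support_finsetSum hN)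
  rw [Finset.mem_range] at hq
  rcases Finset.mem_union.mp (Finsupp.support_add (Finsupp.support_smul hN)) with hN | hN
  · obtain ⟨r, hr, hN⟩ := Finset.mem_biUnion.mp (Finsupp.support_finsetSum hN)
    rw [Finset.mem_range] at hr
    obtain rfl := Finset.mem_singleton.mp
      (Finsupp.support_single_subset (Finsupp.support_smul hN))
    have := totalDeg_set hq (mergeAt (L.getD q []) r)
    rw [length_mergeAt (by omega)] at this
    omega
  · obtain ⟨a, ha, hN⟩ := Finset.mem_biUnion.mp (Finsupp.support_finsetSum hN)
    rw [Finset.mem_Ico] at ha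
    obtain rfl := Finset.mem_singleton.mp
      (Finsupp.support_single_subset (Finsupp.support_smul hN))
    have hL := congrArg totalDeg (List.take_append_drop q L)
    rw [List.drop_eq_getElem_cons hq, ← List.getD_eq_getElem _ []] at hL
    simp only [totalDeg_append, totalDeg_cons, totalDeg_nil, List.length_take,
      List.length_drop] at hL ⊢
    omega

variable (k) in
noncomputable def parity : FBar k →ₗ[k] FBar k :=
  Finsupp.lift (FBar k) k (List (List ℕ)) fun L => (-1 : k) ^ totalDeg L • Finsupp.single L 1

theorem parity_single (L : List (List ℕ)) (c : k) :
    parity k (Finsupp.single L c) = (-1 : k) ^ totalDeg L • Finsupp.single L c := by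
  rw [parity, Finsupp.lift_apply, Finsupp.sum_single_index (by simp), smul_comm,
    Finsupp.smul_single_one]

theorem parity_parity (x : FBar k) : parity k (parity k x) = x := by
  induction x using Finsupp.induction_linear with
  | zero => simp
  | add x y hx hy => simp only [map_add, hx, hy]
  | single L c =>
    rw [parity_single, map_smul, parity_single, smul_smul, ← pow_add, Even.neg_one_pow ⟨_, rfl⟩,
      one_smul]

theorem parity_of_forall_mem_support {x : FBar k} {p : ℕ}
    (hx : ∀ N ∈ x.support, totalDeg N % 2 = p % 2) : parity k x = (-1 : k) ^ p • x := by
  conv_lhs => rw [← Finsupp.sum_single x]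
  conv_rhs => rw [← Finsupp.sum_single x]
  rw [Finsupp.sum, map_sum, Finset.smul_sum]
  refine Finset.sum_congr rfl fun N hN => ?_
  rw [parity_single]
  exact congrArg (· • _) (neg_one_pow_congr (by simp only [Nat.even_iff, hx N hN]))

theorem dBar_parity (x : FBar k) : dBar k (parity k x) = -parity k (dBar k x) := by
  induction x using Finsupp.induction_linear with
  | zero => simp
  | add x y hx hy => simp only [map_add, hx, hy, neg_add]
  | single L c =>
    rw [parity_single, map_smul, dBar_single, map_smul, parity_of_forall_mem_support
      fun N hN => totalDeg_mod_two_of_mem_support_dGen hN, pow_succ, smul_comm c]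
    simp

end Parity

section Juxtaposition

variable {k : Type*} [CommRing k]

variable (k) in
/-- `juxt x y` is `(x ⊗ y) m` in the paper's notation; on basis elements it concatenates. -/
noncomputable def juxt : FBar k →ₗ[k] FBar k →ₗ[k] FBar k :=
  Finsupp.lift _ k (List (List ℕ)) fun M => Finsupp.lmapDomain k k (M ++ ·)

theorem juxt_single_left (M : List (List ℕ)) (y : FBar k) :
    juxt k (Finsupp.single M 1) y = y.mapDomain (M ++ ·) := by
  simp [juxt]

theorem juxt_single_single (M N : List (List ℕ)) :
    juxt k (Finsupp.single M 1) (Finsupp.single N 1) = Finsupp.single (M ++ N) 1 := by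
  rw [juxt_single_left, Finsupp.mapDomain_single]

theorem juxt_single_right (x : FBar k) (N : List (List ℕ)) :
    juxt k x (Finsupp.single N 1) = x.mapDomain (· ++ N) := by
  induction x using Finsupp.induction_linear with
  | zero => simp
  | add x y hx hy => rw [map_add, LinearMap.add_apply, hx, hy, Finsupp.mapDomain_add]
  | single M c =>
    rw [← Finsupp.smul_single_one, map_smul, LinearMap.smul_apply, juxt_single_single,
      Finsupp.mapDomain_smul, Finsupp.mapDomain_single]

theorem dBar_juxt (x y : FBar k) :
    dBar k (juxt k x y) = juxt k (dBar k x) (parity k y) + juxt k x (dBar k y) := by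
  suffices (juxt k).compr₂ (dBar k) =
      ((juxt k).comp (dBar k)).compl₂ (parity k) + (juxt k).compl₂ (dBar k) from
    LinearMap.congr_fun₂ this x y
  ext M N
  simp only [LinearMap.compr₂_apply, LinearMap.add_apply, LinearMap.compl₂_apply,
    LinearMap.comp_apply, Finsupp.lsingle_apply, juxt_single_left, Finsupp.mapDomain_single,
    dBar_single, one_smul, parity_single, map_smul, juxt_single_right, dGen_append]

theorem dBar_dBar_juxt (x y : FBar k) :
    dBar k (dBar k (juxt k x y)) =
      juxt k (dBar k (dBar k x)) y + juxt k x (dBar k (dBar k y)) := by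
  simp only [dBar_juxt, map_add, dBar_parity, parity_parity, map_neg]
  abel

end Juxtaposition

section Generator

variable {k : Type*} [CommRing k]

theorem sum_mergeAt_mergeAt_eq_zero (l : List ℕ) :
    ∑ p ∈ (range (l.length - 1)).sigma (fun _ => range (l.length - 1 - 1)),
      (-1 : k) ^ (l.length - 2 - p.1 + (l.length - 1 - 2 - p.2)) •
        Finsupp.single [mergeAt (mergeAt l p.1) p.2] (1 : k) = 0 := by
  rw [← Finset.sum_filter_add_sum_filter_not _ fun p => p.2 < p.1]
  refine Finset.sum_add_sum_eq_zero_of_bij (fun p => ⟨p.2, p.1 - 1⟩) (fun p => ⟨p.2 + 1, p.1⟩)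
    ?_ ?_ ?_ ?_ ?_ <;> intro p hp <;> simp only [mem_filter, mem_sigma, mem_range, Sigma.ext_iff,
      heq_eq_eq, and_true, true_and] at hp ⊢
  iterate 4 omega
  rw [← mergeAt_mergeAt_of_le (by omega : p.2 ≤ p.1 - 1) (by omega), Nat.sub_add_cancel (by omega)]
  exact neg_one_pow_smul_add_neg_one_pow_smul (Nat.odd_iff.2 (by omega)) _

theorem sum_split_take_add_sum_split_drop_eq_zero (l : List ℕ) :
    (∑ p ∈ (Ico 1 l.length).sigma (fun a => Ico 1 a),
      (-1 : k) ^ (l.length - p.1 + (1 + (l.length - p.1)) + (p.1 - p.2)) •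
        Finsupp.single [(l.take p.1).take p.2, (l.take p.1).drop p.2, l.drop p.1] (1 : k))
    + ∑ p ∈ (Ico 1 l.length).sigma (fun a => Ico 1 (l.length - a)),
      (-1 : k) ^ (l.length - p.1 + (l.length - p.1 - p.2)) •
        Finsupp.single [l.take p.1, (l.drop p.1).take p.2, (l.drop p.1).drop p.2] (1 : k)
    = 0 := by
  refine Finset.sum_add_sum_eq_zero_of_bij (fun p => ⟨p.2, p.1 - p.2⟩) (fun p => ⟨p.1 + p.2, p.1⟩)
    ?_ ?_ ?_ ?_ ?_ <;> intro p hp <;> simp only [mem_sigma, mem_Ico, Sigma.ext_iff,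
      heq_eq_eq, and_true, true_and] at hp ⊢
  iterate 4 omega
  rw [List.take_take, min_eq_left (by omega), List.drop_take, List.drop_drop,
    Nat.add_sub_cancel' (by omega)]
  exact neg_one_pow_smul_add_neg_one_pow_smul (Nat.odd_iff.2 (by omega)) _

theorem sum_split_mergeAt_of_lt_add_sum_mergeAt_take_eq_zero (l : List ℕ) :
    (∑ p ∈ ((range (l.length - 1)).sigma fun _ => Ico 1 (l.length - 1)).filter
        (fun p => p.1 < p.2),
      (-1 : k) ^ (l.length - 2 - p.1 + (l.length - 1 - p.2)) •
        Finsupp.single [(mergeAt l p.1).take p.2, (mergeAt l p.1).drop p.2] (1 : k))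
    + ∑ p ∈ (Ico 1 l.length).sigma (fun a => range (a - 1)),
      (-1 : k) ^ (l.length - p.1 + (1 + (l.length - p.1)) + (p.1 - 2 - p.2)) •
        Finsupp.single [mergeAt (l.take p.1) p.2, l.drop p.1] (1 : k) = 0 := by
  refine Finset.sum_add_sum_eq_zero_of_bij (fun p => ⟨p.2 + 1, p.1⟩) (fun p => ⟨p.2, p.1 - 1⟩)
    ?_ ?_ ?_ ?_ ?_ <;> intro p hp <;> simp only [mem_filter, mem_sigma, mem_range, mem_Ico,
      Sigma.ext_iff, heq_eq_eq, and_true, true_and] at hp ⊢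
  iterate 4 omega
  rw [take_mergeAt_of_lt hp.2 (by omega), drop_mergeAt_of_lt hp.2 (by omega)]
  exact neg_one_pow_smul_add_neg_one_pow_smul (Nat.odd_iff.2 (by omega)) _

theorem sum_split_mergeAt_of_le_add_sum_mergeAt_drop_eq_zero (l : List ℕ) :
    (∑ p ∈ ((range (l.length - 1)).sigma fun _ => Ico 1 (l.length - 1)).filter
        (fun p => ¬p.1 < p.2),
      (-1 : k) ^ (l.length - 2 - p.1 + (l.length - 1 - p.2)) •
        Finsupp.single [(mergeAt l p.1).take p.2, (mergeAt l p.1).drop p.2] (1 : k))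
    + ∑ p ∈ (Ico 1 l.length).sigma (fun a => range (l.length - a - 1)),
      (-1 : k) ^ (l.length - p.1 + (l.length - p.1 - 2 - p.2)) •
        Finsupp.single [l.take p.1, mergeAt (l.drop p.1) p.2] (1 : k) = 0 := by
  refine Finset.sum_add_sum_eq_zero_of_bij (fun p => ⟨p.2, p.1 - p.2⟩) (fun p => ⟨p.1 + p.2, p.1⟩)
    ?_ ?_ ?_ ?_ ?_ <;> intro p hp <;> simp only [mem_filter, mem_sigma, mem_range, mem_Ico,
      Sigma.ext_iff, heq_eq_eq, and_true, true_and, not_lt] at hp ⊢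
  iterate 4 omega
  rw [take_mergeAt_of_le hp.2 (by omega), drop_mergeAt_of_le hp.2 (by omega)]
  exact neg_one_pow_smul_add_neg_one_pow_smul (Nat.odd_iff.2 (by omega)) _

theorem dGen_singleton (l : List ℕ) :
    dGen k [l] =
      (∑ r ∈ range (l.length - 1),
          (-1 : k) ^ (l.length - 2 - r) • Finsupp.single [mergeAt l r] (1 : k))
        + ∑ a ∈ Ico 1 l.length,
            (-1 : k) ^ (l.length - a) • Finsupp.single [l.take a, l.drop a] (1 : k) := by
  simp [dGen, epsExp]

theorem dGen_pair (u v : List ℕ) :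
    dGen k [u, v] =
      (-1 : k) ^ (1 + v.length) •
        ((∑ r ∈ range (u.length - 1),
            (-1 : k) ^ (u.length - 2 - r) • Finsupp.single [mergeAt u r, v] (1 : k))
          + ∑ b ∈ Ico 1 u.length,
              (-1 : k) ^ (u.length - b) • Finsupp.single [u.take b, u.drop b, v] (1 : k))
      + ((∑ r ∈ range (v.length - 1),
            (-1 : k) ^ (v.length - 2 - r) • Finsupp.single [u, mergeAt v r] (1 : k))
          + ∑ b ∈ Ico 1 v.length,
              (-1 : k) ^ (v.length - b) • Finsupp.single [u, v.take b, v.drop b] (1 : k)) := by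
  simp [dGen, epsExp, Finset.sum_range_succ]

theorem dBar_sum_mergeAt (l : List ℕ) :
    dBar k (∑ r ∈ range (l.length - 1),
        (-1 : k) ^ (l.length - 2 - r) • Finsupp.single [mergeAt l r] (1 : k))
      = (∑ p ∈ (range (l.length - 1)).sigma (fun _ => range (l.length - 1 - 1)),
          (-1 : k) ^ (l.length - 2 - p.1 + (l.length - 1 - 2 - p.2)) •
            Finsupp.single [mergeAt (mergeAt l p.1) p.2] (1 : k))
        + ∑ p ∈ (range (l.length - 1)).sigma (fun _ => Ico 1 (l.length - 1)),
          (-1 : k) ^ (l.length - 2 - p.1 + (l.length - 1 - p.2)) •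
            Finsupp.single [(mergeAt l p.1).take p.2, (mergeAt l p.1).drop p.2] (1 : k) := by
  have expand : ∀ r ∈ range (l.length - 1),
      (-1 : k) ^ (l.length - 2 - r) • dGen k [mergeAt l r]
        = (∑ r' ∈ range (l.length - 1 - 1),
             (-1 : k) ^ (l.length - 2 - r + (l.length - 1 - 2 - r')) •
               Finsupp.single [mergeAt (mergeAt l r) r'] (1 : k))
          + ∑ a ∈ Ico 1 (l.length - 1),
              (-1 : k) ^ (l.length - 2 - r + (l.length - 1 - a)) •
                Finsupp.single [(mergeAt l r).take a, (mergeAt l r).drop a] (1 : k) := by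
    intro r hr
    rw [dGen_singleton, length_mergeAt (by rw [mem_range] at hr; omega), smul_add,
      Finset.smul_sum, Finset.smul_sum]
    simp only [smul_smul, ← pow_add]
  simp only [map_sum, map_smul, dBar_single, one_smul]
  rw [Finset.sum_congr rfl expand, Finset.sum_add_distrib, Finset.sum_sigma', Finset.sum_sigma']

theorem dBar_sum_split (l : List ℕ) :
    dBar k (∑ a ∈ Ico 1 l.length,
        (-1 : k) ^ (l.length - a) • Finsupp.single [l.take a, l.drop a] (1 : k))
      = ((∑ p ∈ (Ico 1 l.length).sigma (fun a => range (a - 1)),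
            (-1 : k) ^ (l.length - p.1 + (1 + (l.length - p.1)) + (p.1 - 2 - p.2)) •
              Finsupp.single [mergeAt (l.take p.1) p.2, l.drop p.1] (1 : k))
          + ∑ p ∈ (Ico 1 l.length).sigma (fun a => Ico 1 a),
            (-1 : k) ^ (l.length - p.1 + (1 + (l.length - p.1)) + (p.1 - p.2)) •
              Finsupp.single [(l.take p.1).take p.2, (l.take p.1).drop p.2, l.drop p.1] (1 : k))
        + ((∑ p ∈ (Ico 1 l.length).sigma (fun a => range (l.length - a - 1)),
            (-1 : k) ^ (l.length - p.1 + (l.length - p.1 - 2 - p.2)) •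
              Finsupp.single [l.take p.1, mergeAt (l.drop p.1) p.2] (1 : k))
          + ∑ p ∈ (Ico 1 l.length).sigma (fun a => Ico 1 (l.length - a)),
            (-1 : k) ^ (l.length - p.1 + (l.length - p.1 - p.2)) •
              Finsupp.single [l.take p.1, (l.drop p.1).take p.2, (l.drop p.1).drop p.2]
                (1 : k)) := by
  have expand : ∀ a ∈ Ico 1 l.length,
      (-1 : k) ^ (l.length - a) • dGen k [l.take a, l.drop a]
        = ((∑ r ∈ range (a - 1),
              (-1 : k) ^ (l.length - a + (1 + (l.length - a)) + (a - 2 - r)) •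
                Finsupp.single [mergeAt (l.take a) r, l.drop a] (1 : k))
            + ∑ b ∈ Ico 1 a,
                (-1 : k) ^ (l.length - a + (1 + (l.length - a)) + (a - b)) •
                  Finsupp.single [(l.take a).take b, (l.take a).drop b, l.drop a] (1 : k))
          + ((∑ r ∈ range (l.length - a - 1),
              (-1 : k) ^ (l.length - a + (l.length - a - 2 - r)) •
                Finsupp.single [l.take a, mergeAt (l.drop a) r] (1 : k))
            + ∑ b ∈ Ico 1 (l.length - a),
                (-1 : k) ^ (l.length - a + (l.length - a - b)) •
                  Finsupp.single [l.take a, (l.drop a).take b, (l.drop a).drop b] (1 : k)) := by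
    intro a ha
    rw [mem_Ico] at ha
    rw [dGen_pair, List.length_take, List.length_drop, min_eq_left ha.2.le]
    simp only [smul_add, Finset.smul_sum, smul_smul, ← pow_add, add_assoc]
  simp only [map_sum, map_smul, dBar_single, one_smul]
  rw [Finset.sum_congr rfl expand]
  simp only [Finset.sum_add_distrib]
  rw [Finset.sum_sigma', Finset.sum_sigma', Finset.sum_sigma', Finset.sum_sigma']

theorem dBar_dGen_singleton (l : List ℕ) : dBar k (dGen k [l]) = 0 := by
  rw [dGen_singleton, map_add, dBar_sum_mergeAt, dBar_sum_split,
    ← Finset.sum_filter_add_sum_filter_not ((range (l.length - 1)).sigma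
      fun _ => Ico 1 (l.length - 1)) fun p => p.1 < p.2]
  linear_combination (norm := abel) (sum_mergeAt_mergeAt_eq_zero (k := k) l)
    + sum_split_mergeAt_of_lt_add_sum_mergeAt_take_eq_zero (k := k) l
    + sum_split_mergeAt_of_le_add_sum_mergeAt_drop_eq_zero (k := k) l
    + sum_split_take_add_sum_split_drop_eq_zero (k := k) l

end Generator

theorem dBar_comp_dBar {k : Type*} [CommRing k] : dBar k ∘ₗ dBar k = 0 := by
  ext L : 2
  simp only [LinearMap.comp_apply, LinearMap.zero_apply, Finsupp.lsingle_apply]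
  induction L with
  | nil => simp [dBar_single, dGen]
  | cons l L ih =>
    rw [← List.singleton_append, ← juxt_single_single, dBar_dBar_juxt, ih, dBar_single,
      one_smul, dBar_dGen_singleton, map_zero, LinearMap.zero_apply, map_zero, zero_add]

/-- Let `F̄₁` be the free `As`-bimodule generated by elements `f_n` of degree `1−n`
(`n ≥ 1`), with differential
`f_k ∂ = Σ_{r+2+t=k} (−1)^t (1^{⊗r}⊗m⊗1^{⊗t}) f_{k−1} + Σ_{i+j=k} (−1)^j (f_i ⊗ f_j) m`,
extended to `F̄₁` as a bimodule derivation.  Then `∂² = 0`. -/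
theorem stmt_11 {k : Type*} [CommRing k] :
    ∀ L : List (List ℕ), ValidB L →
      dBar k (dBar k (Finsupp.single L (1 : k))) = 0 :=
  fun L _ => LinearMap.congr_fun dBar_comp_dBar (Finsupp.single L 1)
end

section
/- For a homotopy unital A_∞-morphism f : A → B, the element v^B = j^A f_1^+ − j^B of degree −1 satisfies v^B m_1^B = i^B − i^A f_1; therefore a homotopy unital A_∞-morphism between unital A_∞-algebras is unital (the cycles i^A f_1 and i^B differ by a boundary). -/
/- Operations and morphism components are encoded as functions `(ℕ → A) → B` of sequences of
arguments (only the first `n` entries being relevant, cf. `Dep`).  Koszul signs are encoded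
via parity involutions `σ` of the graded modules: the plain operator corresponding to a
Koszul-signed tensor product of maps applies suitable powers of `σ` to the arguments situated
after a map of odd degree. -/

section Defs

variable {A B : Type*} [AddCommGroup A] [AddCommGroup B]

/-- An operation depends only on its first `n` arguments. -/
def Dep (m : (n : ℕ) → (ℕ → A) → B) : Prop :=
  ∀ n (x y : ℕ → A), (∀ i < n, x i = y i) → m n x = m n y

/-- Extend a tuple `Fin l → ℕ` by zero to `ℕ → ℕ`. -/
def extC (l : ℕ) (c : Fin l → ℕ) : ℕ → ℕ := fun i => if h : i < l then c ⟨i, h⟩ else 0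

/-- Offset of the `q`-th block for block sizes `c`. -/
def blockOff (c : ℕ → ℕ) (q : ℕ) : ℕ := ∑ r ∈ Finset.range q, c r

/-- Koszul twist exponent for the `q`-th block of `f_{c 0} ⊗ ⋯ ⊗ f_{c (l-1)}`,
where `deg f_i = 1 - i`: the sum of the degrees of the preceding factors. -/
def blockTw (c : ℕ → ℕ) (q : ℕ) : ℕ := ∑ r ∈ Finset.range q, (1 + c r)

/-- The sign exponent `σ = Σ_q (q-1)(i_q - 1)` (blocks numbered from 1). -/
def compSign (c : ℕ → ℕ) (l : ℕ) : ℕ := ∑ q ∈ Finset.range l, q * (c q - 1)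

/-- The left-hand side `Σ (−1)^σ (f_{i₁}⊗…⊗f_{i_l}) m_l^B` of the `A_∞`-morphism relation,
as a plain operator (sum over all `l ≥ 0` and compositions `i₁+⋯+i_l = n`, `i_q ≥ 1`). -/
def morLHS (σA : A → A) (mB : (n : ℕ) → (ℕ → B) → B)
    (f : (n : ℕ) → (ℕ → A) → B) (n : ℕ) (x : ℕ → A) : B :=
  ∑ l ∈ Finset.range (n + 1),
    ∑ c ∈ Fintype.piFinset (fun _ : Fin l => Finset.range (n + 1)),
      if (∀ q, 1 ≤ c q) ∧ (∑ q, c q) = n then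
        ((-1 : ℤ) ^ compSign (extC l c) l) •
          mB l (fun q => f (extC l c q)
            (fun s => σA^[blockTw (extC l c) q] (x (blockOff (extC l c) q + s))))
      else 0

/-- The right-hand side `Σ (−1)^{t+rn} (1^{⊗r}⊗m_n^A⊗1^{⊗t}) f_{r+1+t}` of the
`A_∞`-morphism relation, as a plain operator. -/
def morRHS (σA : A → A) (mA : (n : ℕ) → (ℕ → A) → A)
    (f : (n : ℕ) → (ℕ → A) → B) (n : ℕ) (x : ℕ → A) : B :=
  ∑ r ∈ Finset.range (n + 1), ∑ p ∈ Finset.range (n + 1),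
    if 1 ≤ p ∧ r + p ≤ n then
      ((-1 : ℤ) ^ ((n - r - p) + r * p)) •
        f (r + 1 + (n - r - p)) (fun i =>
          if i < r then x i
          else if i = r then mA p (fun s => x (r + s))
          else σA^[p] (x (i + p - 1)))
    else 0

/-- The `A_∞`-morphism relation of arity `n` for `f : A → B`. -/
def MorRel (σA : A → A) (mA : (n : ℕ) → (ℕ → A) → A) (mB : (n : ℕ) → (ℕ → B) → B)
    (f : (n : ℕ) → (ℕ → A) → B) (n : ℕ) : Prop :=
  ∀ x : ℕ → A, morLHS σA mB f n x = morRHS σA mA f n x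

end Defs

/-! Since `f₁⁺` is a chain map (the arity-one `A_∞`-morphism relation) sending `1ˢᵘ_A` to
`1ˢᵘ_B`, we get `i^A f₁ = 1ˢᵘ_B − j^A f₁ m₁ = 1ˢᵘ_B − (v^B + j^B) m₁ = i^B − v^B m₁`;
in particular `i^A f₁ − i^B` is the boundary of `−v^B`. -/

section ArityOne

variable {A B : Type*} [AddCommGroup B]

lemma morLHS_one (σA : A → A) {mB : (n : ℕ) → (ℕ → B) → B} {f : (n : ℕ) → (ℕ → A) → B}
    (hmB : Dep mB) (hf : Dep f) (x : ℕ → A) :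
    morLHS σA mB f 1 x = mB 1 (fun _ => f 1 x) := by
  have hc : ∀ c : Fin 1 → ℕ, ((∀ q, 1 ≤ c q) ∧ ∑ q, c q = 1) ↔ c = fun _ => 1 := by
    intro c
    refine ⟨fun h => funext fun q => ?_, fun h => by simp [h]⟩
    simpa [Subsingleton.elim q 0] using h.2
  simp only [morLHS, Finset.sum_range_succ, Finset.range_zero, Finset.sum_empty, zero_add, hc]
  simp only [Nat.reduceAdd, Fintype.piFinset_of_isEmpty, Finset.univ_unique, IsEmpty.forall_iff,
    Finset.univ_eq_empty, Finset.sum_empty, zero_ne_one, and_false, ↓reduceIte, Finset.sum_const_zero,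
    Int.reduceNeg, compSign, Finset.range_one, Finset.sum_singleton, zero_mul, pow_zero, one_smul,
    Finset.sum_ite_eq', Fintype.mem_piFinset, Finset.mem_range, Order.lt_two_iff, le_refl,
    implies_true, zero_add]
  refine hmB 1 _ _ fun i hi => ?_
  obtain rfl : i = 0 := by omega
  refine hf 1 _ _ fun s _ => ?_
  simp [extC, blockTw, blockOff]

lemma morRHS_one (σA : A → A) {mA : (n : ℕ) → (ℕ → A) → A} {f : (n : ℕ) → (ℕ → A) → B}
    (hmA : Dep mA) (hf : Dep f) (x : ℕ → A) :
    morRHS σA mA f 1 x = f 1 (fun _ => mA 1 x) := by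
  simp only [morRHS, Nat.reduceAdd, Int.reduceNeg, Finset.sum_range_succ, Finset.range_one,
    Finset.sum_singleton, nonpos_iff_eq_zero, one_ne_zero, add_zero, false_and, ↓reduceIte, le_refl,
    add_le_iff_nonpos_left, true_and, tsub_le_iff_right, le_add_iff_nonneg_right, zero_le,
    Nat.sub_eq_zero_of_le, mul_one, zero_add, add_tsub_cancel_right, Function.iterate_one,
    Finset.sum_ite_eq', Finset.mem_range, Order.lt_two_iff, pow_zero, not_lt_zero, one_smul]
  refine hf 1 _ _ fun i hi => ?_
  obtain rfl : i = 0 := by omega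
  exact hmA 1 _ _ fun s _ => by simp

lemma MorRel.mB_one_f_one_eq_f_one_mA_one {σA : A → A} {mA : (n : ℕ) → (ℕ → A) → A}
    {mB : (n : ℕ) → (ℕ → B) → B} {f : (n : ℕ) → (ℕ → A) → B}
    (h : MorRel σA mA mB f 1) (hmA : Dep mA) (hmB : Dep mB) (hf : Dep f) (x : ℕ → A) :
    mB 1 (fun _ => f 1 x) = f 1 (fun _ => mA 1 x) := by
  rw [← morLHS_one σA hmB hf, ← morRHS_one σA hmA hf]
  exact h x

end ArityOne

theorem stmt_17_general {P Q : Type*} [AddCommGroup P] [AddCommGroup Q]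
    (σP : P → P)
    (mA : (n : ℕ) → (ℕ → P) → P) (mB : (n : ℕ) → (ℕ → Q) → Q)
    (f : (n : ℕ) → (ℕ → P) → Q)
    (hdepA : Dep mA) (hdepB : Dep mB) (hdepf : Dep f)
    -- unary operations and `f_1` are additive:
    (haddB1 : ∀ a b : Q, mB 1 (fun _ => a - b) = mB 1 (fun _ => a) - mB 1 (fun _ => b))
    (haddf1 : ∀ a b : P, f 1 (fun _ => a - b) = f 1 (fun _ => a) - f 1 (fun _ => b))
    -- `f⁺` is an `A_∞`-morphism:
    (hmor : ∀ n, 1 ≤ n → MorRel σP mA mB f n)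
    (eA jA : P) (eB jB : Q)      -- strict units `1ˢᵘ` and the elements `j`
    -- (1) `f⁺` is strictly unital:
    (hsu1 : f 1 (fun _ => eA) = eB) :
    mB 1 (fun _ => f 1 (fun _ => jA) - jB) =
      (eB - mB 1 (fun _ => jB)) - f 1 (fun _ => eA - mA 1 (fun _ => jA)) ∧
    ∃ w : Q, f 1 (fun _ => eA - mA 1 (fun _ => jA)) - (eB - mB 1 (fun _ => jB)) =
      mB 1 (fun _ => w) := by
  have hchain := (hmor 1 le_rfl).mB_one_f_one_eq_f_one_mA_one hdepA hdepB hdepf (fun _ => jA)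
  have hunit : f 1 (fun _ => eA - mA 1 (fun _ => jA)) =
      eB - mB 1 (fun _ => f 1 (fun _ => jA)) := by
    rw [haddf1, hsu1, ← hchain]
  refine ⟨?_, jB - f 1 (fun _ => jA), ?_⟩
  · rw [haddB1, hunit]
    abel
  · rw [hunit, haddB1]
    abel

/-- For a homotopy unital `A_∞`-morphism `f : A → B` — a strictly unital `A_∞`-morphism
`f⁺ : A⁺ = A ⊕ k·1ˢᵘ_A ⊕ k·j^A → B⁺ = B ⊕ k·1ˢᵘ_B ⊕ k·j^B` restricting to `f` on `A`, with
`v^B = j^A f_1⁺ − j^B ∈ B` and `(A ⊕ k·j)^{⊗n} f_n⁺ ⊆ B` for `n > 1` — the degree `-1`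
element `v^B` satisfies `v^B m_1^B = i^B − i^A f_1`, where `i^A = 1ˢᵘ_A − j^A m_1^A` and
`i^B = 1ˢᵘ_B − j^B m_1^B` are the homotopy units.  Therefore a homotopy unital
`A_∞`-morphism between unital `A_∞`-algebras is unital: the cycles `i^A f_1` and `i^B`
differ by a boundary. -/
theorem stmt_17 {k P Q : Type*} [CommRing k]
    [AddCommGroup P] [Module k P] [AddCommGroup Q] [Module k Q]
    (AA : Submodule k P) (BB : Submodule k Q)   -- `A ⊆ A⁺ = P`, `B ⊆ B⁺ = Q`
    (σP : P → P) (σQ : Q → Q)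
    (mA : (n : ℕ) → (ℕ → P) → P) (mB : (n : ℕ) → (ℕ → Q) → Q)
    (f : (n : ℕ) → (ℕ → P) → Q)
    (hdepA : Dep mA) (hdepB : Dep mB) (hdepf : Dep f)
    -- unary operations and `f_1` are additive:
    (haddB1 : ∀ a b : Q, mB 1 (fun _ => a - b) = mB 1 (fun _ => a) - mB 1 (fun _ => b))
    (haddf1 : ∀ a b : P, f 1 (fun _ => a - b) = f 1 (fun _ => a) - f 1 (fun _ => b))
    -- `f⁺` is an `A_∞`-morphism:
    (hmor : ∀ n, 1 ≤ n → MorRel σP mA mB f n)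
    (eA jA : P) (eB jB : Q)      -- strict units `1ˢᵘ` and the elements `j`
    -- (1) `f⁺` is strictly unital:
    (hsu1 : f 1 (fun _ => eA) = eB)
    (hsu_hi : ∀ n, 2 ≤ n → ∀ (x : ℕ → P) (i : ℕ), i < n → x i = eA → f n x = 0)
    -- (2) the element `v^B = j^A f_1⁺ − j^B` lies in `B`:
    (hv : f 1 (fun _ => jA) - jB ∈ BB)
    -- homotopy units lie in `A`, resp. `B`:
    (hiA : eA - mA 1 (fun _ => jA) ∈ AA) (hiB : eB - mB 1 (fun _ => jB) ∈ BB)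
    -- (3) the restriction of `f⁺` to `A` gives `f`:
    (hclosA : ∀ n, 1 ≤ n → ∀ x : ℕ → P, (∀ i < n, x i ∈ AA) → f n x ∈ BB)
    -- (4) `(A ⊕ k·j)^{⊗n} f_n⁺ ⊆ B` for `n > 1`:
    (hclosAj : ∀ n, 2 ≤ n → ∀ x : ℕ → P,
      (∀ i < n, ∃ a ∈ AA, ∃ t : k, x i = a + t • jA) → f n x ∈ BB) :
    mB 1 (fun _ => f 1 (fun _ => jA) - jB) =
      (eB - mB 1 (fun _ => jB)) - f 1 (fun _ => eA - mA 1 (fun _ => jA)) ∧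
    ∃ w : Q, f 1 (fun _ => eA - mA 1 (fun _ => jA)) - (eB - mB 1 (fun _ => jB)) =
      mB 1 (fun _ => w) :=
  stmt_17_general σP mA mB f hdepA hdepB hdepf haddB1 haddf1 hmor eA jA eB jB hsu1
end
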